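/- Let F be a field and m ≥ 1 an integer. In F^{2m} with standard basis x_1, …, x_m, y_1, …, y_m (indices taken modulo m, so x_{m+1} = x_1, y_{m+1} = y_1), let B = span{y_1, …, y_m} and define v : B → F^{2m} by v(Σ_{j=1}^m z_j y_j) = Σ_{j=1}^m c_j x_j + Σ_{j=1}^m z_j y_j, where c_j = z_j if z_{j+1} = 0 and c_j = 0 otherwise. Then for every one-dimensional F-subspace L of B, the image v(L) is a one-dimensional F-subspace of F^{2m}; consequently, V = v(B) is projective (F·V = V). -/
import Mathlib


open scoped Classical

/-- `V` is projective: `F·V = V`, i.e. `V` is closed under scalar multiplication. -/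
def IsProjective (F : Type*) {S : Type*} [Field F] [AddCommGroup S] [Module F S]
    (V : Set S) : Prop :=
  ∀ (a : F) ⦃v : S⦄, v ∈ V → a • v ∈ V

/-- The map `v : B → F^{2m}` (with `B = F^m`, the `y`-block, and `F^{2m} = F^m × F^m`):
`v(z) = (c, z)` where `c_j = z_j` if `z_{j+1} = 0` and `c_j = 0` otherwise;
indices are taken modulo `m` (`Fin m` arithmetic). -/
noncomputable def vMap (F : Type*) [Field F] (m : ℕ) [NeZero m] (z : Fin m → F) :
    (Fin m → F) × (Fin m → F) :=
  (fun j => if z (j + 1) = 0 then z j else 0, z)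

lemma vMap_smul {F : Type*} [Field F] (m : ℕ) [NeZero m] (a : F) (z : Fin m → F) :
    vMap F m (a • z) = a • vMap F m z := by
  unfold vMap
  ext j
  · simp only [Prod.smul_fst, Pi.smul_apply, smul_eq_mul]
    rcases eq_or_ne a 0 with rfl | ha
    · simp
    · by_cases h : z (j + 1) = 0 <;> simp [h, ha, mul_eq_zero]
  · simp

theorem statement16 {F : Type*} [Field F] (m : ℕ) [NeZero m] :
    (∀ L : Submodule F (Fin m → F), (∃ w : Fin m → F, w ≠ 0 ∧ L = Submodule.span F {w}) →
      ∃ M : Submodule F ((Fin m → F) × (Fin m → F)),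
        (∃ s : (Fin m → F) × (Fin m → F), s ≠ 0 ∧ M = Submodule.span F {s}) ∧
        vMap F m '' (L : Set (Fin m → F)) = (M : Set ((Fin m → F) × (Fin m → F)))) ∧
    IsProjective F (Set.range (vMap F m)) := by
  constructor
  · rintro L ⟨w, hw, rfl⟩
    refine ⟨Submodule.span F {vMap F m w}, ⟨vMap F m w, ?_, rfl⟩, ?_⟩
    · intro h
      apply hw
      have := congrArg Prod.snd h
      simpa [vMap] using this
    · ext x
      simp only [Set.mem_image, SetLike.mem_coe, Submodule.mem_span_singleton]
      constructor
      · rintro ⟨y, ⟨a, rfl⟩, rfl⟩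
        exact ⟨a, (vMap_smul m a w).symm⟩
      · rintro ⟨a, rfl⟩
        exact ⟨a • w, ⟨a, rfl⟩, vMap_smul m a w⟩
  · rintro a v ⟨z, rfl⟩
    exact ⟨a • z, vMap_smul m a z⟩
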